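/- For any finite non-solvable group G, the solvable graph Γ_s(G) has no isolated vertex: every u ∈ G \ Sol(G) is adjacent in Γ_s(G) to some vertex distinct from u. -/

import Mathlib

/-- The solvabilizer of `u` in `G`: the set of `v` such that `⟨u, v⟩` is solvable. -/
def solvabilizer (G : Type*) [Group G] (u : G) : Set G :=
  {v | IsSolvable (Subgroup.closure {u, v})}

/-- The solvable radical `Sol(G)`: elements `u` with `⟨u, v⟩` solvable for all `v`. -/
def solRadical (G : Type*) [Group G] : Set G :=
  {u | ∀ v : G, IsSolvable (Subgroup.closure {u, v})}

/-- The solvable graph of `G`: vertex set `G \ Sol(G)`, two distinct vertices `u`, `v`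
adjacent iff `⟨u, v⟩` is solvable. -/
def solvableGraph (G : Type*) [Group G] : SimpleGraph {u : G // u ∉ solRadical G} where
  Adj u v := u ≠ v ∧ IsSolvable (Subgroup.closure {(u : G), (v : G)})
  symm := by
    constructor
    rintro u v ⟨hne, hs⟩
    exact ⟨hne.symm, by rwa [Set.pair_comm]⟩
  loopless := by constructor; rintro u ⟨hne, _⟩; exact hne rfl

/-!
If `u⁻¹ ≠ u`, then `u⁻¹` is a neighbour of `u`, as `⟨u, u⁻¹⟩` is cyclic. If `u` is an involution,
it is not central, since central elements lie in `Sol(G)`; so some conjugate `w ≠ u` of `u` is an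
involution outside `Sol(G)`, and `⟨u, w⟩` is dihedral: `u` normalises `⟨uw⟩`, with cyclic quotient.
-/

open Subgroup

namespace Group

variable {G : Type*} [Group G]

theorem isSolvable_of_isMulCommutative [IsMulCommutative G] : IsSolvable G :=
  isSolvable_of_comm fun a b => Std.Commutative.comm a b

theorem isSolvable_closure_pair_of_commute {a b : G} (h : Commute a b) :
    IsSolvable (closure {a, b}) := by
  have : IsMulCommutative (closure {a, b}) := isMulCommutative_closure <| by
    rintro x (rfl | rfl) y (rfl | rfl)
    exacts [rfl, h.eq, h.symm.eq, rfl]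
  exact isSolvable_of_isMulCommutative

theorem isSolvable_of_closure_pair_eq_top {a b : G} (hab : closure {a, b} = ⊤)
    [(zpowers a).Normal] : IsSolvable G := by
  have : IsCyclic (G ⧸ zpowers a) := by
    refine isCyclic_iff_exists_zpowers_eq_top.mpr ⟨QuotientGroup.mk' _ b, ?_⟩
    have := congrArg (map (QuotientGroup.mk' (zpowers a))) hab
    have ha : QuotientGroup.mk' (zpowers a) a = 1 :=
      (QuotientGroup.eq_one_iff a).mpr (mem_zpowers a)
    rwa [MonoidHom.map_closure, Set.image_pair, ha,
      closure_insert_one, ← zpowers_eq_closure,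
      map_top_of_surjective _ (QuotientGroup.mk'_surjective _)] at this
  exact (isSolvable_iff_subgroup_quotient (zpowers a)).mpr
    ⟨isSolvable_of_isMulCommutative, isSolvable_of_isMulCommutative⟩

theorem isSolvable_closure_pair_of_mem_normalizer {a b : G}
    (h : b ∈ normalizer (zpowers a : Set G)) : IsSolvable (closure {a, b}) := by
  set H := closure {a, b}
  have haH : a ∈ H := subset_closure (Set.mem_insert a {b})
  have hbH : b ∈ H := subset_closure (Set.mem_insert_of_mem a rfl)
  have hgen : closure {(⟨a, haH⟩ : H), ⟨b, hbH⟩} = ⊤ := by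
    rw [← closure_closure_coe_preimage (k := {a, b})]
    congr 1
    ext x
    simp [Subtype.ext_iff]
  have hzpowers : (zpowers a).subgroupOf H = zpowers ⟨a, haH⟩ := by
    rw [subgroupOf, ← comap_map_eq_self_of_injective H.subtype_injective (zpowers ⟨a, haH⟩),
      MonoidHom.map_zpowers]
    rfl
  have : (zpowers (⟨a, haH⟩ : H)).Normal := by
    rw [← hzpowers, normal_subgroupOf_iff_le_normalizer (zpowers_le.mpr haH), closure_le]
    rintro x (rfl | rfl)
    exacts [le_normalizer (mem_zpowers x), h]
  exact isSolvable_of_closure_pair_eq_top hgen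

theorem isSolvable_closure_pair_of_inv_eq_self {a b : G} (ha : a⁻¹ = a) (hb : b⁻¹ = b) :
    IsSolvable (closure {a, b}) := by
  have hconj : MulAut.conj a (a * b) = (a * b)⁻¹ := by
    rw [MulAut.conj_apply, mul_inv_rev, ha, hb, ← mul_assoc, inv_eq_iff_mul_eq_one.mp ha, one_mul]
  have hnorm : a ∈ normalizer (zpowers (a * b) : Set G) := by
    rw [mem_normalizer_iff_map_conj_eq, MonoidHom.map_zpowers, MonoidHom.coe_coe, hconj,
      zpowers_inv]
  have hle : closure {a, b} ≤ closure {a * b, a} := by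
    have haH : a ∈ closure {a * b, a} := subset_closure (Set.mem_insert_of_mem _ rfl)
    have habH : a * b ∈ closure {a * b, a} := subset_closure (Set.mem_insert _ _)
    rw [closure_le]
    rintro x (rfl | rfl)
    · exact haH
    · simpa using mul_mem (inv_mem haH) habH
  have := isSolvable_closure_pair_of_mem_normalizer hnorm
  exact isSolvable_of_isSolvable_injective (inclusion_injective hle)

theorem isSolvable_of_isSolvable_map {N : Type*} [Group N] {H : Subgroup G} {f : G →* N}
    (hf : Function.Injective f) [IsSolvable (H.map f)] : IsSolvable H :=
  isSolvable_of_isSolvable_injective (f := (equivMapOfInjective H f hf).toMonoidHom)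
    (equivMapOfInjective H f hf).injective

theorem _root_.Subgroup.closure_pair_inv_left (a b : G) : closure {a⁻¹, b} = closure {a, b} := by
  have key : ∀ x : G, closure {x⁻¹, b} ≤ closure {x, b} := fun x => by
    rw [closure_le]
    rintro y (rfl | rfl)
    exacts [inv_mem (subset_closure (Set.mem_insert x {b})),
      subset_closure (Set.mem_insert_of_mem x rfl)]
  exact le_antisymm (key a) (by simpa using key a⁻¹)

end Group

section SolRadical

variable {G : Type*} [Group G]

theorem inv_mem_solRadical_iff {a : G} : a⁻¹ ∈ solRadical G ↔ a ∈ solRadical G := by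
  refine forall_congr' fun v => ?_
  rw [closure_pair_inv_left]

theorem mem_solRadical_of_conj_mem {a g : G} (h : g * a * g⁻¹ ∈ solRadical G) :
    a ∈ solRadical G := by
  intro x
  set f := (MulAut.conj g).toMonoidHom
  have hmap : (closure {a, x}).map f = closure {g * a * g⁻¹, g * x * g⁻¹} := by
    rw [MonoidHom.map_closure, Set.image_pair]
    rfl
  have : Group.IsSolvable ((closure {a, x}).map f) := hmap ▸ h (g * x * g⁻¹)
  exact Group.isSolvable_of_isSolvable_map (f := f) (MulAut.conj g).injective

theorem center_subset_solRadical : (center G : Set G) ⊆ solRadical G := fun _ ha x =>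
  Group.isSolvable_closure_pair_of_commute (mem_center_iff.mp ha x).symm

end SolRadical

theorem solvableGraph_no_isolated_vertex {G : Type*} [Group G]
    (u : {x : G // x ∉ solRadical G}) :
    ∃ v : {x : G // x ∉ solRadical G}, (solvableGraph G).Adj u v := by
  obtain ⟨a, ha⟩ := u
  by_cases hinv : a⁻¹ = a
  · obtain ⟨g, hg⟩ : ∃ g : G, g * a * g⁻¹ ≠ a := by
      by_contra! hcentral
      refine ha (center_subset_solRadical (mem_center_iff.mpr fun g => ?_))
      rw [← mul_inv_eq_iff_eq_mul, hcentral g]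
    have hinv_conj : (g * a * g⁻¹)⁻¹ = g * a * g⁻¹ := by
      rw [mul_inv_rev, mul_inv_rev, inv_inv, hinv, mul_assoc]
    exact ⟨⟨g * a * g⁻¹, fun h => ha (mem_solRadical_of_conj_mem h)⟩,
      Subtype.coe_ne_coe.mp hg.symm, Group.isSolvable_closure_pair_of_inv_eq_self hinv hinv_conj⟩
  · exact ⟨⟨a⁻¹, fun h => ha (inv_mem_solRadical_iff.mp h)⟩, Subtype.coe_ne_coe.mp (Ne.symm hinv),
      Group.isSolvable_closure_pair_of_commute (Commute.refl a).inv_right⟩
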